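/- arXiv:0904.1669 — 4 statements merged into one kernel-verified Lean document; each statement's English description precedes it below -/
import Mathlib

section
/- Let G be a standard Gaussian random variable, μ ∈ ℝ, σ ≥ 0, u > 0, and m ∈ ℝ. Define f̃(u,z) = (|z|/√(2πu³))·exp(−(z−mu)²/(2u)) for u > 0. Then E[f̃(u, μ+σG)·1_{μ+σG>0}] = (1/√(2π))·E[exp(−(μ−mu)²/(2(σ²+u)))·max((μ+σ²m)/(σ²+u)^{3/2} + σG/(√u·(σ²+u)), 0)]. -/
/-!
Writing `z = μ + σG`, the left side integrates `z₊ · exp (-(z - mu)² / (2u))` against the law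
`N(μ, σ²)`. Completing the square, the density of `N(μ, σ²)` times this kernel is
`√(u / (σ² + u)) · exp (-(μ - mu)² / (2(σ² + u)))` times the density of the "posterior" law
`N(a, ρ²)`, where `a = (uμ + σ²mu) / (σ² + u)` and `ρ² = σ²u / (σ² + u)`. On the right side the
argument of `(·)₊` is `(a + ρG) / (u √(σ² + u))`, so both sides are multiples of `E[(a + ρG)₊]`.
-/

open Real MeasureTheory ProbabilityTheory

/-- First passage density of Brownian motion with drift `m`, extended by `0` for `u ≤ 0`. -/
noncomputable def ftilde (m : ℝ) (u z : ℝ) : ℝ :=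
  if 0 < u then |z| / Real.sqrt (2 * π * u ^ 3) * Real.exp (-(z - m * u) ^ 2 / (2 * u)) else 0

open scoped NNReal

lemma rpow_three_halves_eq_mul_sqrt {x : ℝ} (hx : 0 ≤ x) : x ^ ((3 : ℝ) / 2) = x * √x := by
  rw [sqrt_eq_rpow, show (3 : ℝ) / 2 = 1 + 1 / 2 by norm_num, rpow_add' hx (by norm_num), rpow_one]

lemma ftilde_mul_ite_pos (m : ℝ) {u : ℝ} (hu : 0 < u) (z : ℝ) :
    ftilde m u z * (if 0 < z then (1 : ℝ) else 0)
      = (√(2 * π) * (u * √u))⁻¹ * (max z 0 * rexp (-(z - m * u) ^ 2 / (2 * u))) := by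
  have hsqrt : √(2 * π * u ^ 3) = √(2 * π) * (u * √u) := by
    rw [show u ^ 3 = u ^ 2 * u by ring, sqrt_mul (by positivity) (u ^ 2 * u),
      sqrt_mul (sq_nonneg u), sqrt_sq hu.le]
  rw [ftilde, if_pos hu, hsqrt]
  rcases lt_or_ge 0 z with hz | hz
  · rw [if_pos hz, abs_of_pos hz, max_eq_left hz.le]
    ring
  · rw [if_neg hz.not_gt, max_eq_right hz]
    ring

lemma integral_const_add_mul_gaussianReal (f : ℝ → ℝ) (a b : ℝ) :
    ∫ g, f (a + b * g) ∂gaussianReal 0 1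
      = ∫ z, f z ∂gaussianReal a (.mk (b ^ 2) (sq_nonneg b)) := by
  rcases eq_or_ne b 0 with rfl | hb
  · simp [integral_dirac]
  have hmap : (gaussianReal 0 1).map (fun g => a + b * g)
      = gaussianReal a (.mk (b ^ 2) (sq_nonneg b)) := by
    rw [← Function.comp_def (a + ·) (b * ·), ← Measure.map_map (measurable_const_add a)
      (measurable_const_mul b), gaussianReal_map_const_mul, gaussianReal_map_const_add]
    simp
  rw [← hmap]
  exact (((measurableEmbedding_addLeft a).comp (measurableEmbedding_mulLeft₀ hb)).integral_map
    f).symm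

lemma neg_sq_div_add_neg_sq_div {v u : ℝ} (hv : 0 < v) (hu : 0 < u) (p q z : ℝ) :
    -(z - p) ^ 2 / (2 * v) + -(z - q) ^ 2 / (2 * u)
      = -(p - q) ^ 2 / (2 * (v + u))
        + -(z - (u * p + v * q) / (v + u)) ^ 2 / (2 * (v * u / (v + u))) := by
  field_simp
  ring

lemma gaussianPDFReal_mul_exp_neg_sq_div {v u : ℝ≥0} (hv : v ≠ 0) (hu : u ≠ 0) (p q z : ℝ) :
    gaussianPDFReal p v z * rexp (-(z - q) ^ 2 / (2 * u))
      = √(u / (v + u)) * rexp (-(p - q) ^ 2 / (2 * (v + u)))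
        * gaussianPDFReal ((u * p + v * q) / (v + u)) (v * u / (v + u)) z := by
  have hv' : (0 : ℝ) < v := NNReal.coe_pos.mpr (pos_iff_ne_zero.mpr hv)
  have hu' : (0 : ℝ) < u := NNReal.coe_pos.mpr (pos_iff_ne_zero.mpr hu)
  simp only [gaussianPDFReal, NNReal.coe_div, NNReal.coe_mul, NNReal.coe_add]
  have hsqrt : √(u / (v + u)) * (√(2 * π * (v * u / (v + u))))⁻¹ = (√(2 * π * v))⁻¹ := by
    rw [show 2 * π * (v * u / (v + u) : ℝ) = 2 * π * v * (u / (v + u)) by ring,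
      sqrt_mul (by positivity), mul_inv, ← mul_assoc, mul_comm, ← mul_assoc,
      inv_mul_cancel₀ (by positivity), one_mul]
  calc (√(2 * π * v))⁻¹ * rexp (-(z - p) ^ 2 / (2 * v)) * rexp (-(z - q) ^ 2 / (2 * u))
      = (√(2 * π * v))⁻¹ * rexp (-(z - p) ^ 2 / (2 * v) + -(z - q) ^ 2 / (2 * u)) := by
        rw [exp_add, mul_assoc]
    _ = _ := by
        rw [neg_sq_div_add_neg_sq_div hv' hu', exp_add, ← hsqrt]
        ring

lemma integral_mul_exp_neg_sq_div_gaussianReal (p q : ℝ) (v : ℝ≥0) {u : ℝ≥0} (hu : u ≠ 0)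
    (f : ℝ → ℝ) :
    ∫ z, f z * rexp (-(z - q) ^ 2 / (2 * u)) ∂gaussianReal p v
      = √(u / (v + u)) * rexp (-(p - q) ^ 2 / (2 * (v + u)))
        * ∫ z, f z ∂gaussianReal ((u * p + v * q) / (v + u)) (v * u / (v + u)) := by
  rcases eq_or_ne v 0 with rfl | hv
  · have hu' : (u : ℝ) ≠ 0 := by exact_mod_cast hu
    simp [integral_dirac, hu', mul_comm]
  rw [integral_gaussianReal_eq_integral_smul hv, integral_gaussianReal_eq_integral_smul
    (by positivity), ← integral_const_mul]
  refine integral_congr_ae (ae_of_all _ fun z => ?_)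
  simp only [smul_eq_mul]
  rw [mul_left_comm, gaussianPDFReal_mul_exp_neg_sq_div hv hu]
  ring

lemma div_rpow_three_halves_add_div_eq (m μ σ : ℝ) {u : ℝ} (hu : 0 < u) (g : ℝ) :
    (μ + σ ^ 2 * m) / (σ ^ 2 + u) ^ ((3 : ℝ) / 2) + σ * g / (√u * (σ ^ 2 + u))
      = (u * √(σ ^ 2 + u))⁻¹
        * ((u * μ + σ ^ 2 * (m * u)) / (σ ^ 2 + u) + σ * √u / √(σ ^ 2 + u) * g) := by
  have hT : 0 < σ ^ 2 + u := by positivity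
  rw [rpow_three_halves_eq_mul_sqrt hT.le]
  field_simp
  linear_combination σ * g * u * sq_sqrt hT.le - σ * (σ ^ 2 + u) * g * sq_sqrt hu.le

theorem stmt_0_general (m μ σ u : ℝ) (hu : 0 < u) :
    (∫ g, ftilde m u (μ + σ * g) * (if 0 < μ + σ * g then (1:ℝ) else 0)
        ∂(gaussianReal 0 1))
      = (1 / Real.sqrt (2 * π)) *
        ∫ g, Real.exp (-(μ - m * u) ^ 2 / (2 * (σ ^ 2 + u))) *
          max ((μ + σ ^ 2 * m) / (σ ^ 2 + u) ^ ((3:ℝ)/2)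
            + σ * g / (Real.sqrt u * (σ ^ 2 + u))) 0 ∂(gaussianReal 0 1) := by
  have hT : 0 < σ ^ 2 + u := by positivity
  set v : ℝ≥0 := .mk (σ ^ 2) (sq_nonneg σ)
  set U : ℝ≥0 := .mk u hu.le
  have hvar : (.mk ((σ * √u / √(σ ^ 2 + u)) ^ 2) (sq_nonneg _) : ℝ≥0) = v * U / (v + U) := by
    ext
    simp [v, U, div_pow, mul_pow, sq_sqrt hu.le, sq_sqrt hT.le]
  have hmax (x : ℝ) : max ((u * √(σ ^ 2 + u))⁻¹ * x) 0 = (u * √(σ ^ 2 + u))⁻¹ * max x 0 := by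
    rw [mul_max_of_nonneg _ _ (by positivity), mul_zero]
  calc _ = (√(2 * π) * (u * √u))⁻¹
        * ∫ z, max z 0 * rexp (-(z - m * u) ^ 2 / (2 * u)) ∂gaussianReal μ v := by
        rw [integral_const_add_mul_gaussianReal (fun z => ftilde m u z * (if 0 < z then 1 else 0)),
          ← integral_const_mul]
        simp_rw [ftilde_mul_ite_pos m hu]
        rfl
    _ = (√(2 * π) * (u * √u))⁻¹ * (√(u / (σ ^ 2 + u)) * rexp (-(μ - m * u) ^ 2 / (2 * (σ ^ 2 + u)))
        * ∫ z, max z 0 ∂gaussianReal ((u * μ + σ ^ 2 * (m * u)) / (σ ^ 2 + u)) (v * U / (v + U))) :=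
        congrArg (_ * ·) (integral_mul_exp_neg_sq_div_gaussianReal μ (m * u) v (u := U)
          (NNReal.coe_ne_zero.mp hu.ne') _)
    _ = _ := by
        simp only [div_rpow_three_halves_add_div_eq m μ σ hu, hmax]
        rw [integral_const_mul, integral_const_mul,
          integral_const_add_mul_gaussianReal (fun z => max z 0), hvar, sqrt_div hu.le]
        field_simp

/-- For a standard Gaussian `G`, `μ ∈ ℝ`, `σ ≥ 0`, `u > 0`:
`E[f̃(u, μ+σG) 1_{μ+σG>0}]
  = (2π)^{-1/2} E[exp(-(μ-mu)²/(2(σ²+u))) ((μ+σ²m)/(σ²+u)^{3/2} + σG/(√u (σ²+u)))₊]`. -/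
theorem stmt_0 (m μ σ u : ℝ) (hσ : 0 ≤ σ) (hu : 0 < u) :
    (∫ g, ftilde m u (μ + σ * g) * (if 0 < μ + σ * g then (1:ℝ) else 0)
        ∂(gaussianReal 0 1))
      = (1 / Real.sqrt (2 * π)) *
        ∫ g, Real.exp (-(μ - m * u) ^ 2 / (2 * (σ ^ 2 + u))) *
          max ((μ + σ ^ 2 * m) / (σ ^ 2 + u) ^ ((3:ℝ)/2)
            + σ * g / (Real.sqrt u * (σ ^ 2 + u))) 0 ∂(gaussianReal 0 1) :=
  stmt_0_general m μ σ u hu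
end

section
/- Let m ∈ ℝ and define f̃(u,z) = (|z|/√(2πu³))·exp(−(z−mu)²/(2u)) for u > 0 and f̃(u,z) = 0 for u ≤ 0. For every ε > 0 and M ≥ 1 there exists a constant c > 0 (depending only on ε, M, m) such that for all u > 0 and all z ≠ 0: f̃(u,z) ≤ c·u^{−1+ε}·(|z|^{−4ε} + exp(2mz/M)). -/
open Real

/-!
Write `F(u, z) = |z| e^{-(z - m u)² / (2u)}`, so that `f̃(u, z) ≤ u^{-3/2} F(u, z)`. Everything
rests on the Gaussian moment bound `|w|^p e^{-w² / (2v)} ≤ (p v / e)^{p/2}`, a rescaling of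
`x^q e^{-x} ≤ (q / e)^q`.

* For `u ≤ 1`, `(z - m u)² ≥ z² / 2 - m² u²` makes `F` at most `e^{m²/2}` times a Gaussian of
  variance `2u` in `z`, and the moment bound with `p = 1 + 4ε` gives `u^{1/2 + 2ε} |z|^{-4ε}`.
* For `m z < 0` the cross term only helps, and the remaining factor `e^{-m² u / 2}` absorbs
  `u^ε`.
* For `m z ≥ 0` and `u ≥ 1`, split `|z| ≤ |z - m u| + |m u|`. Since `M ≥ 1`,
  `(z - m u)² + 4 m z u / M ≥ (m u)² / M`, so after extracting `e^{2 m z / M}` both pieces are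
  first Gaussian moments and `F ≤ C √u e^{2 m z / M}`.
-/

lemma rpow_mul_exp_neg_le {q x : ℝ} (hq : 0 ≤ q) (hx : 0 ≤ x) :
    x ^ q * exp (-x) ≤ (q / exp 1) ^ q := by
  rcases hq.eq_or_lt with rfl | hq
  · simpa using hx
  have hx' : 0 ≤ x / q := div_nonneg hx hq.le
  calc x ^ q * exp (-x) = (q * (x / q * exp (-(x / q)))) ^ q := by
        rw [mul_rpow hq.le (by positivity), mul_rpow hx' (exp_pos _).le, ← exp_mul,
          div_rpow hx hq.le]
        field_simp
    _ ≤ (q * exp (-1)) ^ q := by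
        gcongr
        exact mul_exp_neg_le_exp_neg_one _
    _ = (q / exp 1) ^ q := by rw [exp_neg, div_eq_mul_inv]

lemma rpow_mul_exp_neg_mul_le {q a x : ℝ} (hq : 0 ≤ q) (ha : 0 < a) (hx : 0 ≤ x) :
    x ^ q * exp (-(a * x)) ≤ (q / (a * exp 1)) ^ q := by
  have h := rpow_mul_exp_neg_le hq (mul_nonneg ha.le hx)
  rwa [mul_rpow ha.le hx, mul_assoc, ← le_div_iff₀' (rpow_pos_of_pos ha q), ← div_rpow
    (div_nonneg hq (exp_pos 1).le) ha.le, div_div, mul_comm (exp 1)] at h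

lemma abs_rpow_mul_exp_neg_sq_div_le {p v : ℝ} (w : ℝ) (hp : 0 ≤ p) (hv : 0 < v) :
    |w| ^ p * exp (-(w ^ 2 / (2 * v))) ≤ (p * v / exp 1) ^ (p / 2) := by
  have hpv : p * v / exp 1 = p / 2 / (1 / (2 * v) * exp 1) := by field_simp
  have hw : |w| ^ p = (w ^ 2) ^ (p / 2) := by
    rw [← sq_abs, ← rpow_natCast, ← rpow_mul (abs_nonneg w)]
    push_cast
    rw [mul_div_cancel₀ p two_ne_zero]
  have h := rpow_mul_exp_neg_mul_le (q := p / 2) (by positivity)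
    (one_div_pos.mpr (mul_pos two_pos hv)) (sq_nonneg w)
  rw [hw, hpv]
  convert h using 3
  ring

lemma abs_mul_exp_neg_sq_div_le {ε v : ℝ} (z : ℝ) (hε : 0 ≤ ε) (hv : 0 < v) :
    |z| * exp (-(z ^ 2 / (2 * v))) ≤
      ((1 + 4 * ε) / exp 1) ^ (1 / 2 + 2 * ε) * v ^ (1 / 2 + 2 * ε) * |z| ^ (-(4 * ε)) := by
  have hz : |z| = |z| ^ (1 + 4 * ε) * |z| ^ (-(4 * ε)) := by
    rw [← rpow_add' (abs_nonneg z) (by norm_num)]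
    norm_num
  have h := abs_rpow_mul_exp_neg_sq_div_le z (p := 1 + 4 * ε) (by positivity) hv
  rw [mul_div_right_comm, mul_rpow (by positivity) hv.le,
    show (1 + 4 * ε) / 2 = 1 / 2 + 2 * ε by ring] at h
  conv_lhs => rw [hz, mul_right_comm]
  exact mul_le_mul_of_nonneg_right h (rpow_nonneg (abs_nonneg z) _)

lemma exists_abs_mul_exp_le_of_le_one (m : ℝ) {ε : ℝ} (hε : 0 ≤ ε) :
    ∃ C, 0 ≤ C ∧ ∀ u z : ℝ, 0 < u → u ≤ 1 →
      |z| * exp (-(z - m * u) ^ 2 / (2 * u)) ≤ C * u ^ (1 / 2 + ε) * |z| ^ (-(4 * ε)) := by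
  refine ⟨exp (m ^ 2 / 2) * (((1 + 4 * ε) / exp 1) ^ (1 / 2 + 2 * ε) * 2 ^ (1 / 2 + 2 * ε)),
    by positivity, fun u z hu hu1 => ?_⟩
  have hexp : -(z - m * u) ^ 2 / (2 * u) ≤ m ^ 2 / 2 + -(z ^ 2 / (2 * (2 * u))) := by
    field_simp
    nlinarith [sq_nonneg (z - 2 * m * u), mul_pos hu hu,
      mul_nonneg (sq_nonneg m) (sub_nonneg.mpr hu1)]
  have hu_pow : u ^ (1 / 2 + 2 * ε) ≤ u ^ (1 / 2 + ε) :=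
    rpow_le_rpow_of_exponent_ge hu hu1 (by linarith)
  calc |z| * exp (-(z - m * u) ^ 2 / (2 * u))
      ≤ exp (m ^ 2 / 2) * (|z| * exp (-(z ^ 2 / (2 * (2 * u))))) := by
        rw [mul_left_comm, ← exp_add]
        gcongr
    _ ≤ exp (m ^ 2 / 2) * (((1 + 4 * ε) / exp 1) ^ (1 / 2 + 2 * ε) * (2 * u) ^ (1 / 2 + 2 * ε)
          * |z| ^ (-(4 * ε))) :=
        mul_le_mul_of_nonneg_left (abs_mul_exp_neg_sq_div_le z hε (mul_pos two_pos hu))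
          (exp_pos _).le
    _ = exp (m ^ 2 / 2) * (((1 + 4 * ε) / exp 1) ^ (1 / 2 + 2 * ε) * 2 ^ (1 / 2 + 2 * ε))
          * u ^ (1 / 2 + 2 * ε) * |z| ^ (-(4 * ε)) := by
        rw [mul_rpow two_pos.le hu.le]
        ring
    _ ≤ _ := by gcongr

lemma exists_abs_mul_exp_le_of_mul_neg (m : ℝ) {ε : ℝ} (hε : 0 ≤ ε) :
    ∃ C, 0 ≤ C ∧ ∀ u z : ℝ, 0 < u → m * z < 0 →
      |z| * exp (-(z - m * u) ^ 2 / (2 * u)) ≤ C * u ^ (1 / 2 + ε) * |z| ^ (-(4 * ε)) := by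
  rcases eq_or_ne m 0 with rfl | hm
  · exact ⟨0, le_rfl, fun u z _ h => by simp at h⟩
  have ha : 0 < m ^ 2 / 2 := half_pos (sq_pos_of_ne_zero hm)
  refine ⟨((1 + 4 * ε) / exp 1) ^ (1 / 2 + 2 * ε) * (ε / (m ^ 2 / 2 * exp 1)) ^ ε,
    by positivity, fun u z hu hmz => ?_⟩
  have hexp : -(z - m * u) ^ 2 / (2 * u) = -(z ^ 2 / (2 * u)) + (m * z - m ^ 2 / 2 * u) := by
    field_simp
    ring
  have hu_pow : u ^ (1 / 2 + 2 * ε) = u ^ (1 / 2 + ε) * u ^ ε := by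
    rw [← rpow_add hu]
    ring_nf
  calc |z| * exp (-(z - m * u) ^ 2 / (2 * u))
      ≤ |z| * exp (-(z ^ 2 / (2 * u))) * exp (-(m ^ 2 / 2 * u)) := by
        rw [mul_assoc, ← exp_add, hexp]
        gcongr
        linarith
    _ ≤ ((1 + 4 * ε) / exp 1) ^ (1 / 2 + 2 * ε) * u ^ (1 / 2 + 2 * ε) * |z| ^ (-(4 * ε))
          * exp (-(m ^ 2 / 2 * u)) :=
        mul_le_mul_of_nonneg_right (abs_mul_exp_neg_sq_div_le z hε hu) (exp_pos _).le
    _ = ((1 + 4 * ε) / exp 1) ^ (1 / 2 + 2 * ε) * (u ^ ε * exp (-(m ^ 2 / 2 * u)))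
          * u ^ (1 / 2 + ε) * |z| ^ (-(4 * ε)) := by
        rw [hu_pow]
        ring
    _ ≤ _ := by
        gcongr
        exact rpow_mul_exp_neg_mul_le hε ha hu.le

lemma abs_mul_exp_le_of_mul_nonneg {m M u z : ℝ} (hM : 1 ≤ M) (hu : 0 < u) (hmz : 0 ≤ m * z) :
    |z| * exp (-(z - m * u) ^ 2 / (2 * u)) ≤
      ((u / exp 1) ^ (1 / 2 : ℝ) + (M * u / exp 1) ^ (1 / 2 : ℝ)) * exp (2 * m * z / M) := by
  have hM0 : 0 < M := one_pos.trans_le hM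
  have hexp : -(z - m * u) ^ 2 / (2 * u) ≤ -(m * u) ^ 2 / (2 * (M * u)) + 2 * m * z / M := by
    field_simp
    nlinarith [mul_nonneg (mul_nonneg (sq_nonneg (z - m * u)) (sub_nonneg.mpr hM)) hu.le,
      mul_nonneg hmz hu.le, sq_nonneg z, mul_pos hu hM0]
  have hz : |z| ≤ |z - m * u| + |m * u| := by simpa using abs_add_le (z - m * u) (m * u)
  have h_one : 1 ≤ exp (2 * m * z / M) := one_le_exp (by rw [mul_assoc]; positivity)
  have h_centred := abs_rpow_mul_exp_neg_sq_div_le (z - m * u) zero_le_one hu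
  have h_drift := abs_rpow_mul_exp_neg_sq_div_le (m * u) zero_le_one (mul_pos hM0 hu)
  simp only [rpow_one, one_mul, ← neg_div] at h_centred h_drift
  calc |z| * exp (-(z - m * u) ^ 2 / (2 * u))
      ≤ |z - m * u| * exp (-(z - m * u) ^ 2 / (2 * u))
          + |m * u| * exp (-(z - m * u) ^ 2 / (2 * u)) := by
        rw [← add_mul]
        gcongr
    _ ≤ (u / exp 1) ^ (1 / 2 : ℝ) * exp (2 * m * z / M)
          + |m * u| * exp (-(m * u) ^ 2 / (2 * (M * u))) * exp (2 * m * z / M) := by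
        refine add_le_add (h_centred.trans (le_mul_of_one_le_right (by positivity) h_one)) ?_
        rw [mul_assoc, ← exp_add]
        gcongr
    _ ≤ _ := by
        rw [add_mul]
        gcongr

lemma exists_abs_mul_exp_le (m : ℝ) {ε M : ℝ} (hε : 0 ≤ ε) (hM : 1 ≤ M) :
    ∃ c, 0 < c ∧ ∀ u z : ℝ, 0 < u →
      |z| * exp (-(z - m * u) ^ 2 / (2 * u)) ≤
        c * u ^ (1 / 2 + ε) * (|z| ^ (-(4 * ε)) + exp (2 * m * z / M)) := by
  obtain ⟨C₁, hC₁, h_small⟩ := exists_abs_mul_exp_le_of_le_one m hε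
  obtain ⟨C₂, hC₂, h_against⟩ := exists_abs_mul_exp_le_of_mul_neg m hε
  set C₃ := (exp 1)⁻¹ ^ (1 / 2 : ℝ) + (M / exp 1) ^ (1 / 2 : ℝ)
  have hC₃ : 0 ≤ C₃ := by positivity
  refine ⟨C₁ + C₂ + C₃ + 1, by positivity, fun u z hu => ?_⟩
  have h_pow := rpow_nonneg (abs_nonneg z) (-(4 * ε))
  have h_exp := (exp_pos (2 * m * z / M)).le
  rcases le_total u 1 with hu1 | hu1
  · calc _ ≤ C₁ * u ^ (1 / 2 + ε) * |z| ^ (-(4 * ε)) := h_small u z hu hu1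
      _ ≤ _ := by gcongr <;> linarith
  rcases lt_or_ge (m * z) 0 with hmz | hmz
  · calc _ ≤ C₂ * u ^ (1 / 2 + ε) * |z| ^ (-(4 * ε)) := h_against u z hu hmz
      _ ≤ _ := by gcongr <;> linarith
  have h_sqrt : (u / exp 1) ^ (1 / 2 : ℝ) + (M * u / exp 1) ^ (1 / 2 : ℝ)
      = C₃ * u ^ (1 / 2 : ℝ) := by
    rw [div_eq_inv_mul, mul_div_right_comm, mul_rpow (by positivity) hu.le,
      mul_rpow (by positivity) hu.le, add_mul]
  calc _ ≤ C₃ * u ^ (1 / 2 : ℝ) * exp (2 * m * z / M) := by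
        rw [← h_sqrt]
        exact abs_mul_exp_le_of_mul_nonneg hM hu hmz
    _ ≤ _ := by gcongr <;> linarith

lemma ftilde_le_of_le {m u z K s : ℝ} (hu : 0 < u)
    (h : |z| * exp (-(z - m * u) ^ 2 / (2 * u)) ≤ K * u ^ (s + 3 / 2)) :
    ftilde m u z ≤ K * u ^ s := by
  have h_sqrt : u ^ (3 / 2 : ℝ) ≤ √(2 * π * u ^ 3) := by
    rw [sqrt_eq_rpow, ← rpow_natCast, mul_comm (2 * π), mul_rpow (rpow_nonneg hu.le _)
      (by positivity), ← rpow_mul hu.le, show ((3 : ℕ) : ℝ) * (1 / 2) = 3 / 2 by norm_num]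
    exact le_mul_of_one_le_right (by positivity) (one_le_rpow (by linarith [pi_gt_three])
      (by norm_num))
  have h_pos := rpow_pos_of_pos hu (3 / 2)
  rw [ftilde, if_pos hu, div_mul_eq_mul_div]
  calc _ ≤ |z| * exp (-(z - m * u) ^ 2 / (2 * u)) / u ^ (3 / 2 : ℝ) :=
        div_le_div_of_nonneg_left (by positivity) h_pos h_sqrt
    _ ≤ K * u ^ (s + 3 / 2) / u ^ (3 / 2 : ℝ) := div_le_div_of_nonneg_right h h_pos.le
    _ = K * u ^ s := by
        rw [rpow_add hu]
        field_simp

/-- For every ε > 0 and M ≥ 1 there is c > 0 (depending only on ε, M, m) such that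
`f̃(u,z) ≤ c u^{-1+ε} (|z|^{-4ε} + exp(2mz/M))` for all u > 0 and z ≠ 0. -/
theorem stmt_1 (m : ℝ) (ε M : ℝ) (hε : 0 < ε) (hM : 1 ≤ M) :
    ∃ c : ℝ, 0 < c ∧ ∀ u z : ℝ, 0 < u → z ≠ 0 →
      ftilde m u z ≤ c * u ^ (-1 + ε) * (|z| ^ (-(4 * ε)) + Real.exp (2 * m * z / M)) := by
  obtain ⟨c, hc, h⟩ := exists_abs_mul_exp_le m hε.le hM
  refine ⟨c, hc, fun u z hu _ => ?_⟩
  rw [mul_right_comm]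
  apply ftilde_le_of_le hu
  rw [show -1 + ε + 3 / 2 = 1 / 2 + ε by ring, mul_right_comm]
  exact h u z hu
end

section
/- Let G be a standard Gaussian random variable, μ ∈ ℝ, σ > 0, and 0 < α < 1. Then there exist constants k₁, k₂ > 0 depending only on α such that E[|μ + σG|^{−α}] ≤ (k₁/σ)·|μ|^{1−α} + k₂·σ^{−α}. -/
/-!
Writing `μ + σg = σ(g - c)` with `c = -μ/σ`, the expectation is `σ^{-α} E|G - c|^{-α}`, and
`E|G - c|^{-α}` is bounded uniformly in `c`: the Gaussian density is at most `1`, so the law of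
`G` is dominated by Lebesgue measure, and `|y|^{-α}` is at most `1` plus its restriction to
`0 < |y| < 1`, whose Lebesgue integral is `2/(1-α)`.
-/

open Real MeasureTheory ProbabilityTheory Set

lemma lintegral_Ioo_zero_one_rpow_neg {α : ℝ} (hα : α < 1) :
    ∫⁻ x in Ioo (0 : ℝ) 1, ENNReal.ofReal (x ^ (-α)) = ENNReal.ofReal (1 / (1 - α)) := by
  have hα' : -1 < -α := by linarith
  rw [← ofReal_integral_eq_lintegral_ofReal
      ((intervalIntegral.integrableOn_Ioo_rpow_iff one_pos).2 hα')
      (ae_restrict_of_forall_mem measurableSet_Ioo fun x hx => (rpow_pos_of_pos hx.1 _).le),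
    ← integral_Ioc_eq_integral_Ioo, ← intervalIntegral.integral_of_le zero_le_one,
    integral_rpow (Or.inl hα'), zero_rpow (by linarith), one_rpow]
  ring_nf

lemma ofReal_abs_rpow_neg_le {α : ℝ} (hα : 0 ≤ α) (y : ℝ) :
    ENNReal.ofReal (|y| ^ (-α)) ≤
      1 + (Ioo 0 1).indicator (fun x => ENNReal.ofReal (x ^ (-α))) y
        + (Ioo 0 1).indicator (fun x => ENNReal.ofReal (x ^ (-α))) (-y) := by
  rcases le_or_gt 1 |y| with hy | hy
  · calc ENNReal.ofReal (|y| ^ (-α)) ≤ 1 :=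
          ENNReal.ofReal_le_one.2 (rpow_le_one_of_one_le_of_nonpos hy (neg_nonpos.2 hα))
      _ ≤ _ := le_add_right le_self_add
  rcases lt_trichotomy y 0 with hneg | rfl | hpos
  · have hmem : -y ∈ Ioo (0 : ℝ) 1 := ⟨neg_pos.2 hneg, by rwa [abs_of_neg hneg] at hy⟩
    rw [indicator_of_mem hmem, abs_of_neg hneg]
    exact le_add_self
  · calc ENNReal.ofReal (|0| ^ (-α)) ≤ 1 :=
          ENNReal.ofReal_le_one.2 (by simpa using zero_rpow_le_one _)
      _ ≤ _ := le_add_right le_self_add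
  · have hmem : y ∈ Ioo (0 : ℝ) 1 := ⟨hpos, by rwa [abs_of_pos hpos] at hy⟩
    rw [indicator_of_mem hmem, abs_of_pos hpos]
    exact le_add_right le_add_self

lemma lintegral_abs_sub_rpow_neg_le {ν : Measure ℝ} [IsProbabilityMeasure ν]
    (hν : ν ≤ volume) {α : ℝ} (hα0 : 0 ≤ α) (hα1 : α < 1) (c : ℝ) :
    ∫⁻ x, ENNReal.ofReal (|x - c| ^ (-α)) ∂ν ≤ ENNReal.ofReal (1 + 2 / (1 - α)) := by
  set t := (Ioo (0 : ℝ) 1).indicator fun x => ENNReal.ofReal (x ^ (-α))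
  have ht : Measurable t :=
    (measurable_id.pow_const _).ennreal_ofReal.indicator measurableSet_Ioo
  have hint : ∫⁻ y, t y = ENNReal.ofReal (1 / (1 - α)) := by
    rw [lintegral_indicator measurableSet_Ioo, lintegral_Ioo_zero_one_rpow_neg hα1]
  calc ∫⁻ x, ENNReal.ofReal (|x - c| ^ (-α)) ∂ν
      ≤ ∫⁻ x, (1 + t (x - c) + t (-(x - c))) ∂ν :=
        lintegral_mono fun x => ofReal_abs_rpow_neg_le hα0 (x - c)
    _ = 1 + (∫⁻ x, t (x - c) ∂ν) + ∫⁻ x, t (-(x - c)) ∂ν := by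
        rw [lintegral_add_left (by fun_prop),
          lintegral_add_left measurable_const, lintegral_const, measure_univ, one_mul]
    _ ≤ 1 + (∫⁻ x, t (x - c)) + ∫⁻ x, t (-(x - c)) := by gcongr
    _ = 1 + (∫⁻ y, t y) + ∫⁻ y, t y := by
        rw [lintegral_sub_right_eq_self t c, lintegral_sub_right_eq_self (fun y => t (-y)) c,
          lintegral_neg_eq_self]
    _ = ENNReal.ofReal (1 + 2 / (1 - α)) := by
        have h2 : 2 / (1 - α) = 1 / (1 - α) + 1 / (1 - α) := by ring
        rw [hint, h2, ENNReal.ofReal_add zero_le_one (by positivity),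
          ENNReal.ofReal_add (by positivity) (by positivity), ENNReal.ofReal_one, add_assoc]

lemma integral_abs_sub_rpow_neg_le {ν : Measure ℝ} [IsProbabilityMeasure ν]
    (hν : ν ≤ volume) {α : ℝ} (hα0 : 0 ≤ α) (hα1 : α < 1) (c : ℝ) :
    ∫ x, |x - c| ^ (-α) ∂ν ≤ 1 + 2 / (1 - α) := by
  have hα1' : 0 < 1 - α := by linarith
  rw [integral_eq_lintegral_of_nonneg_ae (ae_of_all _ fun _ => rpow_nonneg (abs_nonneg _) _)
    (by fun_prop : Measurable fun x : ℝ => |x - c| ^ (-α)).aestronglyMeasurable]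
  exact ENNReal.toReal_le_of_le_ofReal (by positivity)
    (lintegral_abs_sub_rpow_neg_le hν hα0 hα1 c)

lemma gaussianPDF_le_one (m x : ℝ) : gaussianPDF m 1 x ≤ 1 := by
  rw [gaussianPDF, ENNReal.ofReal_le_one, gaussianPDFReal]
  have hsqrt : (√(2 * π * ((1 : NNReal) : ℝ)))⁻¹ ≤ 1 := by
    refine inv_le_one_of_one_le₀ (one_le_sqrt.2 ?_)
    simp only [NNReal.coe_one, mul_one]
    linarith [pi_gt_three]
  have hexp : rexp (-(x - m) ^ 2 / (2 * ((1 : NNReal) : ℝ))) ≤ 1 :=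
    exp_le_one_iff.2 (div_nonpos_of_nonpos_of_nonneg (neg_nonpos.2 (sq_nonneg _)) (by positivity))
  calc _ ≤ 1 * 1 := mul_le_mul hsqrt hexp (exp_pos _).le zero_le_one
    _ = 1 := one_mul 1

lemma gaussianReal_le_volume (m : ℝ) : gaussianReal m 1 ≤ volume := by
  rw [gaussianReal_of_var_ne_zero m one_ne_zero]
  calc volume.withDensity (gaussianPDF m 1) ≤ volume.withDensity 1 :=
        withDensity_mono (ae_of_all _ (gaussianPDF_le_one m))
    _ = volume := withDensity_one

/-- For a standard Gaussian `G` and `0 < α < 1`, there are constants `k₁, k₂ > 0`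
depending only on `α` with `E[|μ+σG|^{-α}] ≤ k₁ σ⁻¹ |μ|^{1-α} + k₂ σ^{-α}` for all
`μ ∈ ℝ`, `σ > 0`. -/
theorem stmt_5 (α : ℝ) (hα0 : 0 < α) (hα1 : α < 1) :
    ∃ k₁ k₂ : ℝ, 0 < k₁ ∧ 0 < k₂ ∧ ∀ (μ σ : ℝ), 0 < σ →
      (∫ g, |μ + σ * g| ^ (-α) ∂(gaussianReal 0 1))
        ≤ k₁ / σ * |μ| ^ (1 - α) + k₂ * σ ^ (-α) := by
  have hα1' : 0 < 1 - α := by linarith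
  refine ⟨1, 1 + 2 / (1 - α), one_pos, by positivity, fun μ σ hσ => ?_⟩
  have hscale (g : ℝ) : |μ + σ * g| ^ (-α) = σ ^ (-α) * |g - -(μ / σ)| ^ (-α) := by
    rw [show μ + σ * g = σ * (g - -(μ / σ)) by field_simp; ring, abs_mul, abs_of_pos hσ,
      mul_rpow hσ.le (abs_nonneg _)]
  calc ∫ g, |μ + σ * g| ^ (-α) ∂(gaussianReal 0 1)
      = σ ^ (-α) * ∫ g, |g - -(μ / σ)| ^ (-α) ∂(gaussianReal 0 1) := by
        simp_rw [hscale]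
        exact integral_const_mul _ _
    _ ≤ (1 + 2 / (1 - α)) * σ ^ (-α) := by
        rw [mul_comm]
        gcongr
        exact integral_abs_sub_rpow_neg_le (gaussianReal_le_volume 0) hα0.le hα1 _
    _ ≤ 1 / σ * |μ| ^ (1 - α) + (1 + 2 / (1 - α)) * σ ^ (-α) :=
        le_add_of_nonneg_left (by positivity)
end

section
/- Let X̃_t = mt + W_t, let F_Y be the distribution function of Y₁, and x > 0. Then lim_{s→0⁺} E[F_Y((x − X̃_s)⁻)] = (F_Y(x) + F_Y(x⁻))/2, where F_Y(z⁻) denotes the left limit of F_Y at z. -/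
open Real MeasureTheory ProbabilityTheory Filter

/-!
Since `W_s` has the law of `√s Z` with `Z` standard normal, the expectation equals
`E[F((x - ms - √s Z)⁻)]`. For `Z > 0` the argument `x - ms - √s Z` tends to `x` from the left as
`s → 0⁺`, and for `Z < 0` from the right, so by monotonicity and right-continuity of `F` the
integrand tends to `F(x⁻)` resp. `F(x)`. Dominated convergence and the symmetry of `Z` give the
average `(F(x) + F(x⁻))/2`.
-/

open Function Set Topology NNReal

theorem Monotone.tendsto_leftLim_nhdsGT {α β : Type*} [LinearOrder α] [TopologicalSpace α]
    [OrderTopology α] [ConditionallyCompleteLinearOrder β] [TopologicalSpace β] [OrderTopology β]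
    {f : α → β} (hf : Monotone f) {x : α} (hfx : ContinuousWithinAt f (Ici x) x) :
    Tendsto (leftLim f) (𝓝[>] x) (𝓝 (f x)) := by
  refine tendsto_of_tendsto_of_tendsto_of_le_of_le' tendsto_const_nhds
    (hfx.mono Ioi_subset_Ici_self) ?_ (Eventually.of_forall fun t => hf.leftLim_le le_rfl)
  filter_upwards [self_mem_nhdsWithin] with t ht using hf.le_leftLim ht

theorem gaussianReal_map_sqrt_mul (v : ℝ≥0) :
    (gaussianReal 0 1).map (fun z => √(v : ℝ) * z) = gaussianReal 0 v := by
  rw [gaussianReal_map_const_mul, mul_zero, mul_one]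
  congr 1
  ext
  simp

theorem integral_gaussianReal_eq_integral_sqrt_mul {E : Type*} [NormedAddCommGroup E]
    [NormedSpace ℝ E] (v : ℝ≥0) {g : ℝ → E} (hg : AEStronglyMeasurable g (gaussianReal 0 v)) :
    ∫ y, g y ∂gaussianReal 0 v = ∫ z, g (√(v : ℝ) * z) ∂gaussianReal 0 1 := by
  rw [← gaussianReal_map_sqrt_mul] at hg ⊢
  exact integral_map (by fun_prop) hg

theorem gaussianReal_real_Ioi_zero {v : ℝ≥0} (hv : v ≠ 0) :
    (gaussianReal 0 v).real (Ioi 0) = 1 / 2 := by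
  have := nullSingletonClass_gaussianReal (μ := 0) hv
  have hsymm : (gaussianReal 0 v).real (Iic 0) = (gaussianReal 0 v).real (Ioi 0) := by
    rw [measureReal_congr Iio_ae_eq_Iic.symm]
    conv_lhs => rw [← neg_zero, ← gaussianReal_map_neg, neg_zero]
    rw [map_measureReal_apply (by fun_prop) measurableSet_Iio]
    congr 1
    ext z
    simp
  have hcompl := probReal_compl_eq_one_sub (μ := gaussianReal 0 v) (measurableSet_Ioi (a := 0))
  rw [compl_Ioi, hsymm] at hcompl
  linarith

theorem integral_ite_pos_gaussianReal {v : ℝ≥0} (hv : v ≠ 0) (a b : ℝ) :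
    ∫ z, (if 0 < z then a else b) ∂gaussianReal 0 v = (a + b) / 2 := by
  have hIoi := gaussianReal_real_Ioi_zero hv
  have hIic : (gaussianReal 0 v).real (Ioi 0)ᶜ = 1 / 2 := by
    rw [probReal_compl_eq_one_sub measurableSet_Ioi, hIoi]
    norm_num
  change ∫ z, (Ioi 0).piecewise (fun _ => a) (fun _ => b) z ∂gaussianReal 0 v = _
  rw [integral_piecewise measurableSet_Ioi integrableOn_const integrableOn_const,
    setIntegral_const, setIntegral_const, hIoi, hIic, smul_eq_mul, smul_eq_mul]
  ring

theorem eventually_pos_mul_add_sqrt_mul (m : ℝ) {z : ℝ} (hz : 0 < z) :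
    ∀ᶠ s in 𝓝[>] (0 : ℝ), 0 < m * s + √s * z := by
  have hlim : Tendsto (fun s => m * √s + z) (𝓝[>] 0) (𝓝 z) :=
    ((by fun_prop : Continuous fun s => m * √s + z).tendsto' 0 z (by simp)).mono_left
      nhdsWithin_le_nhds
  filter_upwards [hlim.eventually (lt_mem_nhds hz), self_mem_nhdsWithin] with s hpos hs
  have hfactor : m * s + √s * z = √s * (m * √s + z) := by
    linear_combination (-m) * Real.mul_self_sqrt (le_of_lt hs)
  rw [hfactor]
  exact mul_pos (Real.sqrt_pos.2 hs) hpos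

theorem tendsto_sub_mul_add_sqrt_mul (x m z : ℝ) :
    Tendsto (fun s => x - (m * s + √s * z)) (𝓝[>] 0) (𝓝 x) :=
  ((by fun_prop : Continuous fun s => x - (m * s + √s * z)).tendsto' 0 x (by simp)).mono_left
    nhdsWithin_le_nhds

theorem tendsto_sub_mul_add_sqrt_mul_nhdsLT (x m : ℝ) {z : ℝ} (hz : 0 < z) :
    Tendsto (fun s => x - (m * s + √s * z)) (𝓝[>] 0) (𝓝[<] x) := by
  refine tendsto_nhdsWithin_iff.2 ⟨tendsto_sub_mul_add_sqrt_mul x m z, ?_⟩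
  filter_upwards [eventually_pos_mul_add_sqrt_mul m hz] with s hs
  exact sub_lt_self x hs

theorem tendsto_sub_mul_add_sqrt_mul_nhdsGT (x m : ℝ) {z : ℝ} (hz : z < 0) :
    Tendsto (fun s => x - (m * s + √s * z)) (𝓝[>] 0) (𝓝[>] x) := by
  refine tendsto_nhdsWithin_iff.2 ⟨tendsto_sub_mul_add_sqrt_mul x m z, ?_⟩
  filter_upwards [eventually_pos_mul_add_sqrt_mul (-m) (neg_pos.2 hz)] with s hs
  simp only [mem_Ioi]
  linarith

theorem tendsto_leftLim_sub_mul_add_sqrt_mul {F : ℝ → ℝ} (hF : Monotone F) {x : ℝ}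
    (hFx : ContinuousWithinAt F (Ici x) x) (m : ℝ) {z : ℝ} (hz : z ≠ 0) :
    Tendsto (fun s => leftLim F (x - (m * s + √s * z))) (𝓝[>] 0)
      (𝓝 (if 0 < z then leftLim F x else F x)) := by
  rcases hz.lt_or_gt with hneg | hpos
  · rw [if_neg hneg.not_gt]
    exact (hF.tendsto_leftLim_nhdsGT hFx).comp (tendsto_sub_mul_add_sqrt_mul_nhdsGT x m hneg)
  · rw [if_pos hpos]
    have hleft := (continuousWithinAt_leftLim_Iic (hF.tendsto_leftLim x)).mono Iio_subset_Iic_self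
    exact hleft.tendsto.comp (tendsto_sub_mul_add_sqrt_mul_nhdsLT x m hpos)

theorem stmt_16_general {Ω : Type*} [MeasureSpace Ω] [IsProbabilityMeasure (ℙ : Measure Ω)]
    (m : ℝ) (W : ℝ → Ω → ℝ)
    -- W is a standard Brownian motion:
    (hW0 : ∀ ω, W 0 ω = 0)
    (hWlaw : ∀ s t : ℝ, 0 ≤ s → s ≤ t →
      Measure.map (fun ω => W t ω - W s ω) ℙ = gaussianReal 0 (Real.toNNReal (t - s)))
    (F : ℝ → ℝ) (hFmono : Monotone F)
    (hFrc : ∀ z : ℝ, ContinuousWithinAt F (Set.Ici z) z)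
    (hF0 : ∀ z, 0 ≤ F z) (hF1 : ∀ z, F z ≤ 1)
    (x : ℝ) :
    Tendsto (fun s : ℝ => ∫ ω, Function.leftLim F (x - (m * s + W s ω)) ∂(ℙ : Measure Ω))
      (nhdsWithin 0 (Set.Ioi 0))
      (nhds ((F x + Function.leftLim F x) / 2)) := by
  have hmeas : Measurable (leftLim F) := hFmono.leftLim.measurable
  have hbound : ∀ w, ‖leftLim F w‖ ≤ 1 := fun w => abs_le.2
    ⟨by linarith [hF0 (w - 1), hFmono.le_leftLim (sub_one_lt w)],
      (hFmono.leftLim_le le_rfl).trans (hF1 w)⟩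
  have hchange : (fun s => ∫ ω, leftLim F (x - (m * s + W s ω)) ∂(ℙ : Measure Ω))
      =ᶠ[𝓝[>] 0] fun s => ∫ z, leftLim F (x - (m * s + √s * z)) ∂gaussianReal 0 1 := by
    filter_upwards [self_mem_nhdsWithin] with s (hs : 0 < s)
    have hmap := hWlaw 0 s le_rfl hs.le
    simp only [hW0, sub_zero] at hmap
    have hlaw : HasLaw (W s) (gaussianReal 0 s.toNNReal) ℙ :=
      ⟨.of_map_ne_zero (hmap ▸ IsProbabilityMeasure.ne_zero _), hmap⟩
    have hg : Measurable fun y => leftLim F (x - (m * s + y)) := hmeas.comp (by fun_prop)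
    rw [← comp_def (fun y => leftLim F (x - (m * s + y))),
      hlaw.integral_comp hg.aestronglyMeasurable,
      integral_gaussianReal_eq_integral_sqrt_mul _ hg.aestronglyMeasurable,
      Real.coe_toNNReal _ hs.le]
  have hlim := tendsto_integral_filter_of_dominated_convergence (fun _ => 1)
    (Eventually.of_forall fun s =>
      (hmeas.comp (by fun_prop : Measurable fun z => x - (m * s + √s * z))).aestronglyMeasurable)
    (Eventually.of_forall fun s => ae_of_all _ fun z => hbound _) (integrable_const 1)
    (by
      have := nullSingletonClass_gaussianReal (μ := 0) one_ne_zero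
      filter_upwards [(gaussianReal 0 1).ae_ne 0] with z hz
      exact tendsto_leftLim_sub_mul_add_sqrt_mul hFmono (hFrc x) m hz)
  rw [integral_ite_pos_gaussianReal one_ne_zero, add_comm] at hlim
  exact hlim.congr' hchange.symm

/-- For `X̃_s = ms + W_s` and a distribution function `F` (monotone, right-continuous,
bounded between 0 and 1), for `x > 0`:
`lim_{s→0⁺} E[F((x - X̃_s)⁻)] = (F(x) + F(x⁻))/2`. -/
theorem stmt_16 {Ω : Type*} [MeasureSpace Ω] [IsProbabilityMeasure (ℙ : Measure Ω)]
    (m : ℝ) (W : ℝ → Ω → ℝ)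
    -- W is a standard Brownian motion:
    (hWmeas : ∀ t, Measurable (W t))
    (hW0 : ∀ ω, W 0 ω = 0)
    (hWcont : ∀ ω, Continuous fun t => W t ω)
    (hWlaw : ∀ s t : ℝ, 0 ≤ s → s ≤ t →
      Measure.map (fun ω => W t ω - W s ω) ℙ = gaussianReal 0 (Real.toNNReal (t - s)))
    (hWindep : ∀ (n : ℕ) (u : ℕ → ℝ), Monotone u →
      iIndepFun (fun i : Fin n => fun ω => W (u (i + 1)) ω - W (u i) ω) ℙ)
    (F : ℝ → ℝ) (hFmono : Monotone F)
    (hFrc : ∀ z : ℝ, ContinuousWithinAt F (Set.Ici z) z)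
    (hF0 : ∀ z, 0 ≤ F z) (hF1 : ∀ z, F z ≤ 1)
    (x : ℝ) (hx : 0 < x) :
    Tendsto (fun s : ℝ => ∫ ω, Function.leftLim F (x - (m * s + W s ω)) ∂(ℙ : Measure Ω))
      (nhdsWithin 0 (Set.Ioi 0))
      (nhds ((F x + Function.leftLim F x) / 2)) :=
  stmt_16_general m W hW0 hWlaw F hFmono hFrc hF0 hF1 x
end
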